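/- For every ε > 0 there exists a constant C < ∞ such that for all k ∈ ℤ and all x, x′, b ∈ ℝ^d satisfying ρ(x, x′) ≤ 2^{−d}(2^{−k} + ρ(x, b)), one has |S_k(x, b) − S_k(x′, b)| ≤ C · (ρ(x, x′) / (2^{−k} + ρ(x, b)))^{1/d} · 2^{−kε} / (2^{−k} + ρ(x, b))^{1+ε}. -/
import Mathlib


open MeasureTheory

/-- The rectifier (ReLU) function. -/
noncomputable def rect (x : ℝ) : ℝ := max 0 x

/-- The trapezoid function `t`: equal to 2 on [-1,1], vanishing outside (-3,3), linear between. -/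
noncomputable def trap (x : ℝ) : ℝ := rect (x + 3) - rect (x + 1) - rect (x - 1) + rect (x - 3)

/-- The scaling ("father") function `φ(x) = C_d · rect(Σ_j t(x_j) − 2(d−1))` on `ℝ^d`. -/
noncomputable def scalingFn (d : ℕ) (Cd : ℝ) (x : EuclideanSpace ℝ (Fin d)) : ℝ :=
  Cd * rect ((∑ j, trap (x j)) - 2 * ((d : ℝ) - 1))

/-- The averaging kernel `S_k(x,b) = 2^k φ(2^{k/d}(x − b))`. -/
noncomputable def Sker (d : ℕ) (Cd : ℝ) (k : ℤ) (x b : EuclideanSpace ℝ (Fin d)) : ℝ :=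
  (2 : ℝ) ^ k * scalingFn d Cd (((2 : ℝ) ^ ((k : ℝ) / d)) • (x - b))

/-- `ρ(x,b) = c‖x−b‖₂^d`, where `c` is the Lebesgue volume of a Euclidean ball of diameter 1
in `ℝ^d`, i.e. the volume of the smallest Euclidean ball containing both `x` and `b`. -/
noncomputable def rhoVol (d : ℕ) (x b : EuclideanSpace ℝ (Fin d)) : ℝ :=
  (volume (Metric.ball (0 : EuclideanSpace ℝ (Fin d)) (1 / 2))).toReal * ‖x - b‖ ^ d

lemma rect_lip (a b : ℝ) : |rect a - rect b| ≤ |a - b| := by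
  unfold rect
  rw [max_comm 0 a, max_comm 0 b]
  exact abs_max_sub_max_le_abs a b 0

lemma trap_lip (a b : ℝ) : |trap a - trap b| ≤ 4 * |a - b| := by
  have h1 := abs_le.mp (rect_lip (a+3) (b+3))
  have h2 := abs_le.mp (rect_lip (a+1) (b+1))
  have h3 := abs_le.mp (rect_lip (a-1) (b-1))
  have h4 := abs_le.mp (rect_lip (a-3) (b-3))
  simp only [add_sub_add_right_eq_sub, sub_sub_sub_cancel_right] at h1 h2 h3 h4
  unfold trap
  rw [abs_le]
  constructor <;> nlinarith [h1.1, h1.2, h2.1, h2.2, h3.1, h3.2, h4.1, h4.2]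

lemma trap_le_two (a : ℝ) : trap a ≤ 2 := by
  unfold trap rect
  have h1 : max 0 (a+3) ≤ 2 + max 0 (a+1) := by
    apply max_le <;> [positivity; nlinarith [le_max_right (0:ℝ) (a+1)]]
  have h2 : max 0 (a-3) ≤ max 0 (a-1) := by
    apply max_le_max le_rfl; linarith
  linarith

lemma trap_eq_zero {a : ℝ} (h : 3 ≤ |a|) : trap a = 0 := by
  unfold trap rect
  rcases le_or_gt 3 a with ha | ha
  · rw [max_eq_right, max_eq_right, max_eq_right, max_eq_right] <;> linarith
  · have ha' : a ≤ -3 := by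
      rcases abs_cases a with ⟨h1, h2⟩ | ⟨h1, h2⟩ <;> linarith
    rw [max_eq_left, max_eq_left, max_eq_left, max_eq_left] <;> linarith

lemma coord_le_norm {d : ℕ} (w : EuclideanSpace ℝ (Fin d)) (j : Fin d) : |w j| ≤ ‖w‖ := by
  rw [EuclideanSpace.norm_eq, ← Real.sqrt_sq_eq_abs]
  apply Real.sqrt_le_sqrt
  have := Finset.single_le_sum (f := fun i => ‖w i‖^2) (fun i _ => by positivity) (Finset.mem_univ j)
  simpa [Real.norm_eq_abs, sq_abs] using this

lemma scaling_lip (d : ℕ) {Cd : ℝ} (hCd : 0 ≤ Cd) (u v : EuclideanSpace ℝ (Fin d)) :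
    |scalingFn d Cd u - scalingFn d Cd v| ≤ 4 * Cd * d * ‖u - v‖ := by
  unfold scalingFn
  rw [← mul_sub, abs_mul, abs_of_nonneg hCd]
  have h1 : |rect ((∑ j, trap (u j)) - 2 * ((d : ℝ) - 1)) -
      rect ((∑ j, trap (v j)) - 2 * ((d : ℝ) - 1))| ≤ 4 * d * ‖u - v‖ := by
    calc _ ≤ |((∑ j, trap (u j)) - 2 * ((d : ℝ) - 1)) - ((∑ j, trap (v j)) - 2 * ((d : ℝ) - 1))| :=
          rect_lip _ _
      _ = |∑ j, (trap (u j) - trap (v j))| := by rw [Finset.sum_sub_distrib]; ring_nf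
      _ ≤ ∑ j : Fin d, |trap (u j) - trap (v j)| := Finset.abs_sum_le_sum_abs _ _
      _ ≤ ∑ j : Fin d, 4 * ‖u - v‖ := by
          apply Finset.sum_le_sum
          intro j _
          calc |trap (u j) - trap (v j)| ≤ 4 * |u j - v j| := trap_lip _ _
            _ ≤ 4 * ‖u - v‖ := by
                have : |u j - v j| ≤ ‖u - v‖ := by
                  have := coord_le_norm (u - v) j
                  simpa using this
                linarith
      _ = 4 * d * ‖u - v‖ := by simp [Finset.sum_const]; ring
  calc Cd * |_ - _| ≤ Cd * (4 * d * ‖u - v‖) := by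
        exact mul_le_mul_of_nonneg_left h1 hCd
    _ = 4 * Cd * d * ‖u - v‖ := by ring

lemma scaling_vanish (d : ℕ) (hd : 1 ≤ d) (Cd : ℝ) (u : EuclideanSpace ℝ (Fin d))
    (h : 3 * Real.sqrt d < ‖u‖) : scalingFn d Cd u = 0 := by
  obtain ⟨j, hj⟩ : ∃ j, 3 ≤ |u j| := by
    by_contra hc
    push_neg at hc
    have : ‖u‖ ≤ 3 * Real.sqrt d := by
      rw [EuclideanSpace.norm_eq]
      have h9 : (∑ i, ‖u i‖ ^ 2) ≤ ∑ _i : Fin d, (9:ℝ) := by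
        apply Finset.sum_le_sum
        intro i _
        have := (hc i).le
        rw [Real.norm_eq_abs]
        nlinarith [abs_nonneg (u i)]
      calc Real.sqrt (∑ i, ‖u i‖ ^ 2) ≤ Real.sqrt (∑ _i : Fin d, (9:ℝ)) := Real.sqrt_le_sqrt h9
        _ = Real.sqrt (9 * d) := by rw [Finset.sum_const]; simp; ring_nf
        _ = 3 * Real.sqrt d := by
            rw [Real.sqrt_mul (by norm_num)]
            rw [show (9:ℝ) = 3^2 by norm_num, Real.sqrt_sq (by norm_num)]
    linarith
  unfold scalingFn
  have hsum : (∑ i, trap (u i)) - 2 * ((d : ℝ) - 1) ≤ 0 := by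
    have : (∑ i, trap (u i)) = trap (u j) + ∑ i ∈ Finset.univ.erase j, trap (u i) :=
      (Finset.add_sum_erase _ (fun i => trap (u i)) (Finset.mem_univ j)).symm
    rw [this, trap_eq_zero hj, zero_add]
    have hcard : (Finset.univ.erase j).card = d - 1 := by
      rw [Finset.card_erase_of_mem (Finset.mem_univ j)]
      simp
    have hle : ∑ i ∈ Finset.univ.erase j, trap (u i) ≤ (Finset.univ.erase j).card • (2:ℝ) :=
      Finset.sum_le_card_nsmul _ _ 2 (fun i _ => trap_le_two _)
    rw [hcard] at hle
    have : ((d - 1 : ℕ) : ℝ) = (d : ℝ) - 1 := by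
      have := Nat.cast_sub (R := ℝ) hd
      simpa using this
    rw [nsmul_eq_mul, this] at hle
    linarith
  rw [rect, max_eq_left hsum, mul_zero]

theorem statement4 (d : ℕ) (hd : 1 ≤ d) (Cd : ℝ) (hCd : 0 < Cd)
    (hnorm : ∫ x : EuclideanSpace ℝ (Fin d), scalingFn d Cd x = 1)
    (ε : ℝ) (hε : 0 < ε) :
    ∃ C : ℝ, ∀ (k : ℤ) (x x' b : EuclideanSpace ℝ (Fin d)),
      rhoVol d x x' ≤ (2 : ℝ) ^ (-(d : ℤ)) * ((2 : ℝ) ^ (-k) + rhoVol d x b) →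
      |Sker d Cd k x b - Sker d Cd k x' b| ≤
        C * (rhoVol d x x' / ((2 : ℝ) ^ (-k) + rhoVol d x b)) ^ ((1 : ℝ) / d) *
          ((2 : ℝ) ^ (-(k : ℝ) * ε) / ((2 : ℝ) ^ (-k) + rhoVol d x b) ^ (1 + ε)) := by
  classical
  set c : ℝ := (volume (Metric.ball (0 : EuclideanSpace ℝ (Fin d)) (1 / 2))).toReal with hc_def
  have hc : 0 < c := by
    apply ENNReal.toReal_pos
    · exact (Metric.measure_ball_pos volume 0 (by norm_num)).ne'
    · exact measure_ball_lt_top.ne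
  have hd0 : (0:ℝ) < d := by exact_mod_cast Nat.lt_of_lt_of_le Nat.zero_lt_one hd
  have hdR : (d:ℝ) ≠ 0 := hd0.ne'
  have hsd : (0:ℝ) ≤ Real.sqrt d := Real.sqrt_nonneg _
  set L : ℝ := 4 * Cd * d with hL_def
  have hL : 0 < L := by positivity
  set A : ℝ := 4 + c * (12 * Real.sqrt d)^d with hA_def
  have hA4 : (4:ℝ) ≤ A := by
    have : 0 ≤ c * (12 * Real.sqrt d)^d := by positivity
    linarith
  have hA : 0 < A := by linarith
  set β : ℝ := 1/d + 1 + ε with hβ_def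
  have hβ : 0 < β := by positivity
  refine ⟨L * A ^ β / c ^ ((1:ℝ)/d), ?_⟩
  intro k x x' b hρ
  set T : ℝ := (2:ℝ) ^ (-k) with hT_def
  have hT : 0 < T := by positivity
  set r : ℝ := T + rhoVol d x b with hr_def
  have hρxb : rhoVol d x b = c * ‖x - b‖ ^ d := rfl
  have hρxx : rhoVol d x x' = c * ‖x - x'‖ ^ d := rfl
  have hρxb0 : 0 ≤ rhoVol d x b := by rw [hρxb]; positivity
  have hρxx0 : 0 ≤ rhoVol d x x' := by rw [hρxx]; positivity
  have hr : 0 < r := by rw [hr_def]; linarith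
  have hTr : T ≤ r := by rw [hr_def]; linarith
  set s : ℝ := (2:ℝ) ^ ((k:ℝ) / d) with hs_def
  have hs : 0 < s := Real.rpow_pos_of_pos two_pos _
  set n : ℝ := ‖x - x'‖ with hn_def
  have hn0 : 0 ≤ n := norm_nonneg _
  -- the kernel difference
  have hdiff : Sker d Cd k x b - Sker d Cd k x' b
      = (2:ℝ)^k * (scalingFn d Cd (s • (x - b)) - scalingFn d Cd (s • (x' - b))) := by
    simp only [Sker, hs_def]; ring
  -- T as an rpow, and relation with s
  have hT_rpow : T = (2:ℝ) ^ (-(k:ℝ) : ℝ) := by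
    rw [hT_def, ← Real.rpow_intCast (2:ℝ) (-k)]
    norm_num
  have h2k_rpow : (2:ℝ)^k = (2:ℝ) ^ ((k:ℝ) : ℝ) := by
    rw [← Real.rpow_intCast (2:ℝ) k]
  have hT1d : T ^ ((1:ℝ)/d) = s⁻¹ := by
    rw [hT_rpow, hs_def, ← Real.rpow_mul (by norm_num : (0:ℝ) ≤ 2),
      ← Real.rpow_neg (by norm_num : (0:ℝ) ≤ 2)]
    congr 1
    ring
  have hsT : s * T ^ ((1:ℝ)/d) = 1 := by
    rw [hT1d, mul_inv_cancel₀ hs.ne']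
  -- convert the assumption
  have hρ' : c * n ^ d ≤ ((2:ℝ)^d)⁻¹ * r := by
    rw [← hρxx]
    calc rhoVol d x x' ≤ (2:ℝ) ^ (-(d:ℤ)) * r := hρ
      _ = ((2:ℝ)^d)⁻¹ * r := by rw [zpow_neg, zpow_natCast]
  rcases le_or_gt r (A * T) with hcase | hcase
  · -- Lipschitz case
    have hlip := scaling_lip d hCd.le (s • (x - b)) (s • (x' - b))
    have hsub : s • (x - b) - s • (x' - b) = s • (x - x') := by
      rw [← smul_sub]; congr 1; abel
    rw [hsub] at hlip
    have hnorm_smul : ‖s • (x - x')‖ = s * n := by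
      rw [norm_smul, Real.norm_eq_abs, abs_of_pos hs, hn_def]
    rw [hnorm_smul] at hlip
    have hLHS : |Sker d Cd k x b - Sker d Cd k x' b| ≤ (2:ℝ)^k * (L * (s * n)) := by
      rw [hdiff, abs_mul, abs_of_pos (zpow_pos two_pos k)]
      exact mul_le_mul_of_nonneg_left (by simpa [hL_def] using hlip) (zpow_pos two_pos k).le
    -- rewrite the RHS
    have hstepA : (rhoVol d x x' / r) ^ ((1:ℝ)/d) = c ^ ((1:ℝ)/d) * n / r ^ ((1:ℝ)/d) := by
      rw [hρxx, Real.div_rpow (by positivity) hr.le,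
        Real.mul_rpow hc.le (by positivity)]
      congr 2
      rw [← Real.rpow_natCast n d, ← Real.rpow_mul hn0, mul_one_div, div_self hdR,
        Real.rpow_one]
    have hmerge : r ^ ((1:ℝ)/d) * r ^ ((1:ℝ) + ε) = r ^ β := by
      rw [← Real.rpow_add hr, hβ_def]; ring_nf
    have hrβ : 0 < r ^ β := Real.rpow_pos_of_pos hr _
    have hcpow : (0:ℝ) < c ^ ((1:ℝ)/d) := Real.rpow_pos_of_pos hc _
    have hRHS_eq : L * A ^ β / c ^ ((1:ℝ)/d) * (rhoVol d x x' / r) ^ ((1:ℝ)/d) *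
        ((2:ℝ) ^ (-(k:ℝ) * ε) / r ^ (1 + ε))
        = L * A ^ β * n * (2:ℝ) ^ (-(k:ℝ) * ε) / r ^ β := by
      rw [hstepA, ← hmerge]
      field_simp
    rw [hRHS_eq]
    -- key exponent computation
    have hkey : (2:ℝ)^k * (L * (s * n)) * r ^ β ≤ L * A ^ β * n * (2:ℝ) ^ (-(k:ℝ) * ε) := by
      have hrβle : r ^ β ≤ A ^ β * T ^ β := by
        rw [← Real.mul_rpow hA.le hT.le]
        exact Real.rpow_le_rpow hr.le hcase hβ.le
      have hexp : (2:ℝ)^k * s * T ^ β = (2:ℝ) ^ (-(k:ℝ) * ε) := by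
        rw [h2k_rpow, hs_def, hT_rpow, ← Real.rpow_mul (by norm_num : (0:ℝ) ≤ 2),
          ← Real.rpow_add two_pos, ← Real.rpow_add two_pos]
        congr 1
        rw [hβ_def]
        field_simp
        ring
      calc (2:ℝ)^k * (L * (s * n)) * r ^ β
          ≤ (2:ℝ)^k * (L * (s * n)) * (A ^ β * T ^ β) := by
            apply mul_le_mul_of_nonneg_left hrβle
            positivity
        _ = L * A ^ β * n * ((2:ℝ)^k * s * T ^ β) := by ring
        _ = L * A ^ β * n * (2:ℝ) ^ (-(k:ℝ) * ε) := by rw [hexp]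
    exact hLHS.trans ((le_div_iff₀ hrβ).mpr hkey)
  · -- vanishing case
    have hPT : (12 * Real.sqrt d)^d * T < r / c := by
      have hAc : c * (12 * Real.sqrt d)^d ≤ A := by
        rw [hA_def]
        linarith
      rw [lt_div_iff₀ hc]
      calc (12 * Real.sqrt d) ^ d * T * c = c * (12 * Real.sqrt d)^d * T := by ring
        _ ≤ A * T := by exact mul_le_mul_of_nonneg_right hAc hT.le
        _ < r := hcase
    have hQ : 12 * Real.sqrt d * T ^ ((1:ℝ)/d) < (r / c) ^ ((1:ℝ)/d) := by
      have h0 : (0:ℝ) ≤ (12 * Real.sqrt d)^d * T := by positivity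
      have := Real.rpow_lt_rpow h0 hPT (by positivity : (0:ℝ) < 1/(d:ℝ))
      rwa [Real.mul_rpow (by positivity) hT.le, ← Real.rpow_natCast (12 * Real.sqrt d) d,
        ← Real.rpow_mul (by positivity), mul_one_div, div_self hdR, Real.rpow_one] at this
    -- T < r / 4
    have hT4 : T < r / 4 := by
      have h4T : 4 * T ≤ A * T := mul_le_mul_of_nonneg_right hA4 hT.le
      linarith
    -- lower bound on ‖x - b‖
    have hxb_pow : (3/4) * r / c ≤ ‖x - b‖ ^ (d:ℕ) := by
      have : (3/4) * r ≤ rhoVol d x b := by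
        have h := hr_def
        linarith
      rw [hρxb] at this
      rw [div_le_iff₀ hc]
      linarith
    have hxb : (3/4) * (r/c) ^ ((1:ℝ)/d) ≤ ‖x - b‖ := by
      have h1 : ((3/4) * (r/c)) ^ ((1:ℝ)/d) ≤ ‖x - b‖ := by
        have h2 : ((3/4) * (r/c)) ^ ((1:ℝ)/d) ≤ (‖x - b‖ ^ (d:ℕ)) ^ ((1:ℝ)/d) := by
          apply Real.rpow_le_rpow (by positivity) _ (by positivity)
          calc (3/4) * (r/c) = (3/4) * r / c := by ring
            _ ≤ _ := hxb_pow
        rwa [← Real.rpow_natCast ‖x - b‖ d, ← Real.rpow_mul (norm_nonneg _), mul_one_div,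
          div_self hdR, Real.rpow_one] at h2
      calc (3/4) * (r/c) ^ ((1:ℝ)/d) ≤ (3/4 : ℝ) ^ ((1:ℝ)/d) * (r/c) ^ ((1:ℝ)/d) := by
            apply mul_le_mul_of_nonneg_right _ (by positivity)
            calc ((3:ℝ)/4) = (3/4 : ℝ) ^ (1:ℝ) := by rw [Real.rpow_one]
              _ ≤ (3/4 : ℝ) ^ ((1:ℝ)/d) := by
                  apply Real.rpow_le_rpow_of_exponent_ge (by norm_num) (by norm_num)
                  rw [div_le_one hd0]
                  exact_mod_cast hd
        _ = ((3/4) * (r/c)) ^ ((1:ℝ)/d) := by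
            rw [Real.mul_rpow (by norm_num) (by positivity)]
        _ ≤ ‖x - b‖ := h1
    -- upper bound on ‖x - x'‖
    have hxx : n ≤ (r/c) ^ ((1:ℝ)/d) / 2 := by
      have h2 : n ^ (d:ℕ) ≤ (r/c) * ((1:ℝ)/2)^(d:ℕ) := by
        rw [div_mul_eq_mul_div, le_div_iff₀ hc]
        calc n ^ (d:ℕ) * c = c * n ^ (d:ℕ) := by ring
          _ ≤ ((2:ℝ)^d)⁻¹ * r := hρ'
          _ = r * ((1:ℝ)/2)^(d:ℕ) := by
              rw [one_div, inv_pow]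
              ring
      have h3 : (n ^ (d:ℕ)) ^ ((1:ℝ)/d) ≤ ((r/c) * ((1:ℝ)/2)^(d:ℕ)) ^ ((1:ℝ)/d) :=
        Real.rpow_le_rpow (by positivity) h2 (by positivity)
      rw [← Real.rpow_natCast n d, ← Real.rpow_mul hn0, mul_one_div, div_self hdR,
        Real.rpow_one, Real.mul_rpow (by positivity) (by positivity),
        ← Real.rpow_natCast ((1:ℝ)/2) d, ← Real.rpow_mul (by norm_num), mul_one_div,
        div_self hdR, Real.rpow_one] at h3
      calc n ≤ (r/c) ^ ((1:ℝ)/d) * (1/2) := h3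
        _ = (r/c) ^ ((1:ℝ)/d) / 2 := by ring
    -- both kernels vanish
    have hxb_big : 3 * Real.sqrt d * T ^ ((1:ℝ)/d) < ‖x - b‖ := by
      have hTpos : 0 < T ^ ((1:ℝ)/d) := Real.rpow_pos_of_pos hT _
      have hmono : 0 ≤ Real.sqrt d * T ^ ((1:ℝ)/d) := mul_nonneg hsd hTpos.le
      linarith [hQ, hxb]
    have hxb'_big : 3 * Real.sqrt d * T ^ ((1:ℝ)/d) < ‖x' - b‖ := by
      have htri : ‖x - b‖ ≤ n + ‖x' - b‖ := by
        calc ‖x - b‖ = ‖(x - x') + (x' - b)‖ := by congr 1; abel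
          _ ≤ ‖x - x'‖ + ‖x' - b‖ := norm_add_le _ _
      have hq : (1/4 : ℝ) * (r/c) ^ ((1:ℝ)/d) ≤ ‖x' - b‖ := by
        have := hxb
        linarith
      have hTpos : 0 < T ^ ((1:ℝ)/d) := Real.rpow_pos_of_pos hT _
      have hmono : 0 ≤ Real.sqrt d * T ^ ((1:ℝ)/d) := mul_nonneg hsd hTpos.le
      linarith [hQ]
    have hvan1 : scalingFn d Cd (s • (x - b)) = 0 := by
      apply scaling_vanish d hd
      rw [norm_smul, Real.norm_eq_abs, abs_of_pos hs]
      calc 3 * Real.sqrt d = s * (3 * Real.sqrt d * T ^ ((1:ℝ)/d)) := by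
            rw [show s * (3 * Real.sqrt d * T ^ ((1:ℝ)/d)) = 3 * Real.sqrt d * (s * T ^ ((1:ℝ)/d)) by ring, hsT, mul_one]
        _ < s * ‖x - b‖ := by exact mul_lt_mul_of_pos_left hxb_big hs
    have hvan2 : scalingFn d Cd (s • (x' - b)) = 0 := by
      apply scaling_vanish d hd
      rw [norm_smul, Real.norm_eq_abs, abs_of_pos hs]
      calc 3 * Real.sqrt d = s * (3 * Real.sqrt d * T ^ ((1:ℝ)/d)) := by
            rw [show s * (3 * Real.sqrt d * T ^ ((1:ℝ)/d)) = 3 * Real.sqrt d * (s * T ^ ((1:ℝ)/d)) by ring, hsT, mul_one]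
        _ < s * ‖x' - b‖ := by exact mul_lt_mul_of_pos_left hxb'_big hs
    rw [hdiff, hvan1, hvan2, sub_zero, mul_zero, abs_zero]
    have h1 : 0 ≤ L * A ^ β / c ^ ((1:ℝ)/d) := by positivity
    have h2 : 0 ≤ (rhoVol d x x' / r) ^ ((1:ℝ)/d) :=
      Real.rpow_nonneg (div_nonneg hρxx0 hr.le) _
    have h3 : 0 ≤ (2:ℝ) ^ (-(k:ℝ) * ε) / r ^ ((1:ℝ) + ε) := by positivity
    positivity
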